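/- arXiv:1809.03154 — 3 statements merged into one kernel-verified Lean document; each statement's English description precedes it below -/
import Mathlib

section
/- Let P_1, ..., P_n be real polynomials of degree at most d. Consider the two-parameter family of values sgn(P_i(δ) + (1/β - 1)·P_i(0)) for δ ∈ ℝ and β ∈ (0,1), with sgn(x) = 1 if x ≥ 0 and 0 otherwise. Then the number of distinct vectors in {0,1}^n realized by ((sgn(P_1(δ) + (1/β - 1)P_1(0)), ..., sgn(P_n(δ) + (1/β - 1)P_n(0)))) over all (δ, β) is at most (n² + n)d + n + 1. -/
/-!
Write `c = 1/β - 1 > 0` and `b_k = P_k(0)`. For fixed `δ`, as `c` grows the `k`-th sign, that of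
`P_k(δ) + c b_k`, switches at most once, at `θ_k(δ) = -P_k(δ)/b_k`. So every vector is met just
right of `c = 0`, or at or just right of some `θ_i(δ)`, and one of the two per `i` suffices,
chosen by the sign of `b_i`: `n + 1` families indexed by `δ`. In the family of `θ_i`, the `k`-th
coordinate depends only on the sign at `δ` of `P_k - (b_k/b_i) P_i`, of degree at most `d`.
Sweeping `δ` from left to right, such a vector changes only at roots of its coordinate
polynomials, and each pair (coordinate, root) brings at most one new vector, since the other
coordinates do not change there and this one is binary. So each family has at most `n d + 1`
members.
-/

/-- sgn(x) = 1 if x ≥ 0 and 0 otherwise. -/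
noncomputable def sgn01 (x : ℝ) : Fin 2 := if 0 ≤ x then 1 else 0

open Polynomial

def IsConstOnGaps {α : Type*} (g : ℝ → α) (Z : Finset ℝ) : Prop :=
  ∀ ⦃x y⦄, x ≤ y → (∀ z ∈ Z, z ∉ Set.Icc x y) → g x = g y

lemma fin_two_eq_of_ne_of_ne {a b c : Fin 2} (ha : a ≠ c) (hb : b ≠ c) : a = b := by
  revert a b c; decide

lemma Set.OrdConnected.exists_mem_gt_of_finset {I : Set ℝ} (hI : I.OrdConnected) {x ρ : ℝ}
    (hx : x ∈ I) (hρ : ρ ∈ I) (hxρ : x < ρ) (s : Finset ℝ) :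
    ∃ y ∈ I, y < ρ ∧ ∀ z ∈ s, z < ρ → z < y := by
  classical
  set t := insert x (s.filter (· < ρ))
  have ht : t.Nonempty := Finset.insert_nonempty _ _
  have hmρ : t.max' ht < ρ := (t.max'_lt_iff ht).2 fun z hz => by
    rcases Finset.mem_insert.1 hz with rfl | hz
    exacts [hxρ, (Finset.mem_filter.1 hz).2]
  have hxm : x ≤ t.max' ht := t.le_max' x (Finset.mem_insert_self _ _)
  refine ⟨(t.max' ht + ρ) / 2, hI.out hx hρ ⟨by linarith, by linarith⟩, by linarith,
    fun z hz hzρ => ?_⟩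
  have := t.le_max' z (Finset.mem_insert_of_mem (Finset.mem_filter.2 ⟨hz, hzρ⟩))
  linarith

section SweepCount

variable {ι : Type*} [Fintype ι] {f : ℝ → ι → Fin 2} {Z : ι → Finset ℝ}

lemma ncard_image_le_one_of_forall_notMem (hf : ∀ k, IsConstOnGaps (f · k) (Z k))
    {J : Set ℝ} (hJ : J.OrdConnected) (hZ : ∀ k, ∀ z ∈ Z k, z ∉ J) :
    (f '' J).ncard ≤ 1 := by
  refine (Set.ncard_le_one (Set.toFinite _)).2 ?_
  rintro _ ⟨x, hx, rfl⟩ _ ⟨y, hy, rfl⟩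
  wlog hxy : x ≤ y generalizing x y
  · exact (this y hy x hx (le_of_not_ge hxy)).symm
  funext k
  exact hf k hxy fun z hz hzxy => hZ k z hz (hJ.out hx hy hzxy)

lemma ncard_image_inter_Ici_le_two (hf : ∀ k, IsConstOnGaps (f · k) (Z k))
    {I : Set ℝ} (hI : I.OrdConnected) {ρ : ℝ}
    (hρ : ∀ k, ∀ z ∈ Z k, z ∈ I → z ≤ ρ) :
    (f '' (I ∩ Set.Ici ρ)).ncard ≤ 2 := by
  have hsub : f '' (I ∩ Set.Ici ρ) ⊆ insert (f ρ) (f '' (I ∩ Set.Ioi ρ)) := by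
    rintro _ ⟨x, ⟨hxI, hxρ⟩, rfl⟩
    rcases (Set.mem_Ici.1 hxρ).eq_or_lt with rfl | h
    · exact Set.mem_insert _ _
    · exact Set.mem_insert_of_mem _ ⟨x, ⟨hxI, h⟩, rfl⟩
  have hone := ncard_image_le_one_of_forall_notMem hf (hI.inter Set.ordConnected_Ioi)
    fun k z hz hzI => (hρ k z hz hzI.1).not_gt hzI.2
  exact (Set.ncard_le_ncard hsub (Set.toFinite _)).trans
    ((Set.ncard_insert_le _ _).trans (by omega))

/-- If `ρ` is the last critical point of `I` and only the coordinate `k` is critical there,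
then every vector met on `I ∩ [ρ, ∞)` agrees off `k` with the vector met just before `ρ`;
being binary, at most one of them is new. -/
lemma ncard_image_inter_Ici_diff_le_one (hf : ∀ k, IsConstOnGaps (f · k) (Z k))
    {I : Set ℝ} (hI : I.OrdConnected) {ρ : ℝ} (hρI : ρ ∈ I)
    (hρ : ∀ k, ∀ z ∈ Z k, z ∈ I → z ≤ ρ) (hK : (Finset.univ.filter (ρ ∈ Z ·)).card = 1)
    {x₀ : ℝ} (hx₀ : x₀ ∈ I ∩ Set.Iio ρ) :
    (f '' (I ∩ Set.Ici ρ) \ f '' (I ∩ Set.Iio ρ)).ncard ≤ 1 := by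
  classical
  obtain ⟨k, hk⟩ := Finset.card_eq_one.1 hK
  have hkρ : ∀ j, ∀ z ∈ Z j, z ∈ I → z < ρ ∨ (z = ρ ∧ j = k) := fun j z hz hzI => by
    rcases (hρ j z hz hzI).lt_or_eq with h | rfl
    · exact Or.inl h
    · exact Or.inr ⟨rfl, Finset.mem_singleton.1 <|
        hk ▸ Finset.mem_filter.2 ⟨Finset.mem_univ _, hz⟩⟩
  obtain ⟨y, hyI, hyρ, hy⟩ :=
    hI.exists_mem_gt_of_finset hx₀.1 hρI hx₀.2 (Finset.univ.biUnion Z)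
  have hagree : ∀ x ∈ I ∩ Set.Ici ρ, ∀ j ≠ k, f x j = f y j := by
    rintro x ⟨hxI, hxρ⟩ j hjk
    refine (hf j (hyρ.le.trans hxρ) fun z hz hzx => ?_).symm
    rcases hkρ j z hz (hI.out hyI hxI hzx) with hzρ | ⟨_, rfl⟩
    · exact (hy z (Finset.mem_biUnion.2 ⟨j, Finset.mem_univ _, hz⟩) hzρ).not_ge hzx.1
    · exact hjk rfl
  have hnew : ∀ x ∈ I ∩ Set.Ici ρ, f x ∉ f '' (I ∩ Set.Iio ρ) → f x k ≠ f y k :=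
    fun x hx hxnew hxk => hxnew ⟨y, ⟨hyI, hyρ⟩, funext fun j => by
      by_cases hjk : j = k
      · subst hjk; exact hxk.symm
      · exact (hagree x hx j hjk).symm⟩
  refine (Set.ncard_le_one (Set.toFinite _)).2 ?_
  rintro _ ⟨⟨x, hx, rfl⟩, hxnew⟩ _ ⟨⟨x', hx', rfl⟩, hx'new⟩
  funext j
  by_cases hjk : j = k
  · subst hjk; exact fin_two_eq_of_ne_of_ne (hnew x hx hxnew) (hnew x' hx' hx'new)
  · exact (hagree x hx j hjk).trans (hagree x' hx' j hjk).symm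

lemma card_filter_mem_inter_Iio_lt {s : Finset ℝ} {I : Set ℝ} [DecidablePred (· ∈ I)]
    {ρ : ℝ} (hρ : ρ ∈ s.filter (· ∈ I)) :
    (s.filter (· ∈ I ∩ Set.Iio ρ)).card < (s.filter (· ∈ I)).card := by
  refine Finset.card_lt_card ((Finset.ssubset_iff_of_subset fun z hz => ?_).2
    ⟨ρ, hρ, fun h => lt_irrefl ρ (Finset.mem_filter.1 h).2.2⟩)
  exact Finset.mem_filter.2 ⟨(Finset.mem_filter.1 hz).1, (Finset.mem_filter.1 hz).2.1⟩

lemma sum_card_filter_mem_eq_add {I : Set ℝ} [DecidablePred (· ∈ I)] {ρ : ℝ}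
    (hρI : ρ ∈ I) (hρ : ∀ k, ∀ z ∈ Z k, z ∈ I → z ≤ ρ) :
    ∑ k, ((Z k).filter (· ∈ I)).card =
      ∑ k, ((Z k).filter (· ∈ I ∩ Set.Iio ρ)).card +
        (Finset.univ.filter (ρ ∈ Z ·)).card := by
  rw [Finset.card_filter, ← Finset.sum_add_distrib]
  refine Finset.sum_congr rfl fun k _ => ?_
  rw [← Finset.card_filter_add_card_filter_not (s := (Z k).filter (· ∈ I)) (p := (· < ρ)),
    Finset.filter_filter, Finset.filter_filter, ← Finset.card_singleton ρ, ← Finset.card_empty,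
    ← apply_ite Finset.card, ← Finset.filter_eq']
  congr 2
  exact Finset.filter_congr fun z hz => ⟨fun h => le_antisymm (hρ k z hz h.1) (not_lt.1 h.2),
    by rintro rfl; exact ⟨hρI, lt_irrefl _⟩⟩

/-- Sweeping `I` from the left, each critical point `z ∈ Z k` adds at most one new vector. -/
theorem ncard_image_le_sum_card_add_one (hf : ∀ k, IsConstOnGaps (f · k) (Z k))
    {I : Set ℝ} [DecidablePred (· ∈ I)] (hI : I.OrdConnected) :
    (f '' I).ncard ≤ ∑ k, ((Z k).filter (· ∈ I)).card + 1 := by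
  induction hN : ((Finset.univ.biUnion Z).filter (· ∈ I)).card using Nat.strong_induction_on
    generalizing I with
  | _ N ih =>
  set C := (Finset.univ.biUnion Z).filter (· ∈ I)
  have hmemC : ∀ k, ∀ z ∈ Z k, z ∈ I → z ∈ C := fun k z hz hzI =>
    Finset.mem_filter.2 ⟨Finset.mem_biUnion.2 ⟨k, Finset.mem_univ _, hz⟩, hzI⟩
  rcases C.eq_empty_or_nonempty with hCe | hCne
  · exact (ncard_image_le_one_of_forall_notMem hf hI fun k z hz hzI =>
      Finset.notMem_empty z (hCe ▸ hmemC k z hz hzI)).trans (Nat.le_add_left _ _)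
  set ρ := C.max' hCne
  have hρI : ρ ∈ I := (Finset.mem_filter.1 (C.max'_mem hCne)).2
  have hleρ : ∀ k, ∀ z ∈ Z k, z ∈ I → z ≤ ρ := fun k z hz hzI =>
    C.le_max' z (hmemC k z hz hzI)
  have hsum := sum_card_filter_mem_eq_add hρI hleρ
  set K := Finset.univ.filter (ρ ∈ Z ·)
  have hK : 1 ≤ K.card := by
    obtain ⟨k, -, hk⟩ := Finset.mem_biUnion.1 (Finset.mem_filter.1 (C.max'_mem hCne)).1
    exact Finset.card_pos.2 ⟨k, Finset.mem_filter.2 ⟨Finset.mem_univ _, hk⟩⟩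
  have hleft := ih _ (hN ▸ card_filter_mem_inter_Iio_lt (C.max'_mem hCne))
    (I := I ∩ Set.Iio ρ) (hI.inter Set.ordConnected_Iio) rfl
  have hright := ncard_image_inter_Ici_le_two hf hI hleρ
  have hdiff := Set.ncard_le_ncard (Set.sdiff_subset (s := f '' (I ∩ Set.Ici ρ))
    (t := f '' (I ∩ Set.Iio ρ))) (Set.toFinite _)
  have hsplit :
      f '' I = f '' (I ∩ Set.Iio ρ) ∪ (f '' (I ∩ Set.Ici ρ) \ f '' (I ∩ Set.Iio ρ)) := by
    rw [Set.union_sdiff_self, ← Set.image_union, ← Set.inter_union_distrib_left,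
      Set.Iio_union_Ici, Set.inter_univ]
  rw [hsplit, hsum]
  refine (Set.ncard_union_le _ _).trans ?_
  rcases (I ∩ Set.Iio ρ).eq_empty_or_nonempty with he | hne
  · have : (f '' (I ∩ Set.Iio ρ)).ncard = 0 := by rw [he, Set.image_empty, Set.ncard_empty]
    omega
  · rcases hK.eq_or_lt with hK1 | hK2
    · have := ncard_image_inter_Ici_diff_le_one hf hI hρI hleρ hK1.symm hne.some_mem
      omega
    · omega

end SweepCount

theorem Polynomial.isConstOnGaps_sign_eval (Q : ℝ[X]) :
    IsConstOnGaps (fun x => SignType.sign (Q.eval x)) Q.roots.toFinset := by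
  intro x y hxy h
  dsimp only
  by_cases hQ : Q = 0
  · simp [hQ]
  have hne : ∀ z ∈ Set.Icc x y, Q.eval z ≠ 0 := fun z hz h0 =>
    h z (Multiset.mem_toFinset.2 ((mem_roots hQ).2 h0)) hz
  have hcont := Q.continuous.continuousOn (s := Set.Icc x y)
  rcases (hne x ⟨le_rfl, hxy⟩).lt_or_gt with hx | hx <;>
    rcases (hne y ⟨hxy, le_rfl⟩).lt_or_gt with hy | hy
  · rw [sign_neg hx, sign_neg hy]
  · obtain ⟨z, hz, hz0⟩ := intermediate_value_Icc hxy hcont ⟨hx.le, hy.le⟩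
    exact absurd hz0 (hne z hz)
  · obtain ⟨z, hz, hz0⟩ := intermediate_value_Icc' hxy hcont ⟨hy.le, hx.le⟩
    exact absurd hz0 (hne z hz)
  · rw [sign_pos hx, sign_pos hy]

theorem ncard_range_sign_pattern_le {ι : Type*} [Fintype ι] {d : ℕ} (Q : ι → ℝ[X])
    (hQ : ∀ k, (Q k).natDegree ≤ d) (h : ι → ℝ → Fin 2)
    (hh : ∀ k x y, SignType.sign x = SignType.sign y → h k x = h k y) :
    (Set.range fun δ k => h k ((Q k).eval δ)).ncard ≤ Fintype.card ι * d + 1 := by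
  classical
  have hcount := ncard_image_le_sum_card_add_one (f := fun δ k => h k ((Q k).eval δ))
    (Z := fun k => (Q k).roots.toFinset)
    (fun k _ _ hxy hZ => hh k _ _ ((Q k).isConstOnGaps_sign_eval hxy hZ))
    (I := Set.univ) Set.ordConnected_univ
  rw [Set.image_univ] at hcount
  refine hcount.trans (Nat.add_le_add_right ?_ 1)
  calc ∑ k, ((Q k).roots.toFinset.filter (· ∈ Set.univ)).card ≤ ∑ _k : ι, d :=
        Finset.sum_le_sum fun k _ => (Finset.card_filter_le _ _).trans <|
          (Multiset.toFinset_card_le _).trans ((Q k).card_roots'.trans (hQ k))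
    _ = Fintype.card ι * d := by simp

/-- `sgn01 (x + ε * b)` for all sufficiently small `ε > 0`. -/
noncomputable def sgn01Lex (x b : ℝ) : Fin 2 := if x = 0 then sgn01 b else sgn01 x

lemma sgn01_eq_of_sign_eq {x y : ℝ} (h : SignType.sign x = SignType.sign y) :
    sgn01 x = sgn01 y := by
  have : (0 ≤ x ↔ 0 ≤ y) := by
    rw [← not_lt, ← not_lt, ← sign_eq_neg_one_iff, ← sign_eq_neg_one_iff, h]
  simp only [sgn01, this]

lemma sgn01Lex_eq_of_sign_eq {x y : ℝ} (b : ℝ) (h : SignType.sign x = SignType.sign y) :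
    sgn01Lex x b = sgn01Lex y b := by
  have : (x = 0 ↔ y = 0) := by rw [← sign_eq_zero_iff, ← sign_eq_zero_iff (a := y), h]
  simp only [sgn01Lex, this, sgn01_eq_of_sign_eq h]

lemma sgn01Lex_eq_sgn01 {x b : ℝ} (h : x = 0 → 0 ≤ b) : sgn01Lex x b = sgn01 x := by
  unfold sgn01Lex
  split_ifs with hx
  · simp [sgn01, h hx, hx]
  · rfl

lemma sgn01Lex_add_mul_eq_sgn01 {x b t c : ℝ} (htc : t < c)
    (hroot : ∀ r ∈ Set.Ioo t c, x + r * b = 0 → b = 0) (hc : x + c * b = 0 → b ≤ 0) :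
    sgn01Lex (x + t * b) b = sgn01 (x + c * b) := by
  rcases eq_or_ne b 0 with rfl | hb
  · simp only [mul_zero, add_zero, sgn01Lex]
    split_ifs with hx
    · rw [hx]
    · rfl
  -- with `r` the root, both sides are signs of `(s - r) * b`, for `s = t` and `s = c`
  set r := -x / b
  have hx : x = -(r * b) := by simp only [r]; field_simp
  have ht : x + t * b = (t - r) * b := by rw [hx]; ring
  have hc' : x + c * b = (c - r) * b := by rw [hx]; ring
  have hr : r ∉ Set.Ioo t c := fun hmem => hb (hroot r hmem (by rw [hx]; ring))
  unfold sgn01Lex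
  split_ifs with h0
  · obtain rfl : t = r := by
      rw [ht] at h0
      exact sub_eq_zero.1 ((mul_eq_zero.1 h0).resolve_right hb)
    refine sgn01_eq_of_sign_eq ?_
    rw [hc', sign_mul, sign_pos (sub_pos.2 htc), one_mul]
  rcases lt_trichotomy r c with hrc | rfl | hrc
  · have hrt : r < t := lt_of_le_of_ne (not_lt.1 fun h => hr ⟨h, hrc⟩) fun h => h0 (by
      rw [ht, h, sub_self, zero_mul])
    refine sgn01_eq_of_sign_eq ?_
    rw [ht, hc', sign_mul, sign_mul, sign_pos (sub_pos.2 hrt), sign_pos (sub_pos.2 hrc)]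
  · have hb' : b < 0 := lt_of_le_of_ne (hc (by rw [hc', sub_self, zero_mul])) hb
    rw [ht, hc', sub_self, zero_mul, sgn01, sgn01, if_pos le_rfl,
      if_pos (mul_nonneg_of_nonpos_of_nonpos (sub_nonpos.2 htc.le) hb'.le)]
  · refine sgn01_eq_of_sign_eq ?_
    rw [ht, hc', sign_mul, sign_mul, sign_neg (sub_neg.2 (htc.trans hrc)), sign_neg (sub_neg.2 hrc)]

section SweepVectors

variable {n : ℕ} (P : Fin n → ℝ[X])

/-- `c` stands for `1/β - 1`. -/
noncomputable def signVecAt (δ c : ℝ) : Fin n → Fin 2 :=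
  fun k => sgn01 ((P k).eval δ + c * (P k).eval 0)

noncomputable def signVecRight (δ c : ℝ) : Fin n → Fin 2 :=
  fun k => sgn01Lex ((P k).eval δ + c * (P k).eval 0) ((P k).eval 0)

noncomputable def threshold (i : Fin n) (δ : ℝ) : ℝ := -(P i).eval δ / (P i).eval 0

/-- For fixed `δ`, every `signVecAt P δ c` with `c > 0` is read off just right of `c = 0`, at a
threshold with `P i 0 > 0`, or just right of a threshold with `P i 0 < 0`
(`exists_breakpointVec_eq`). -/
noncomputable def breakpointVec : Option (Fin n) → ℝ → Fin n → Fin 2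
  | none => fun δ => signVecRight P δ 0
  | some i => fun δ => if 0 < (P i).eval 0 then signVecAt P δ (threshold P i δ)
      else signVecRight P δ (threshold P i δ)

lemma threshold_eq {i : Fin n} {δ r : ℝ} (hb : (P i).eval 0 ≠ 0)
    (h : (P i).eval δ + r * (P i).eval 0 = 0) : threshold P i δ = r := by
  rw [threshold, div_eq_iff hb]
  linarith

lemma exists_threshold_max_lt (δ : ℝ) {c : ℝ} (hc : 0 < c) :
    ∃ t < c, (t = 0 ∨ ∃ j, (P j).eval 0 ≠ 0 ∧ threshold P j δ = t) ∧
      ∀ k, (P k).eval 0 ≠ 0 → threshold P k δ < c → threshold P k δ ≤ t := by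
  classical
  set T := insert 0 ((Finset.univ.filter fun k => (P k).eval 0 ≠ 0 ∧ threshold P k δ < c).image
    (threshold P · δ))
  have hT : T.Nonempty := Finset.insert_nonempty _ _
  refine ⟨T.max' hT, (T.max'_lt_iff hT).2 fun y hy => ?_, ?_, fun k hk hkc =>
    T.le_max' _ (Finset.mem_insert_of_mem (Finset.mem_image_of_mem _ (by simp [hk, hkc])))⟩
  · rcases Finset.mem_insert.1 hy with rfl | hy
    · exact hc
    · obtain ⟨k, hk, rfl⟩ := Finset.mem_image.1 hy
      exact (Finset.mem_filter.1 hk).2.2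
  · rcases Finset.mem_insert.1 (T.max'_mem hT) with h | h
    · exact Or.inl h
    · obtain ⟨j, hj, hjt⟩ := Finset.mem_image.1 h
      exact Or.inr ⟨j, (Finset.mem_filter.1 hj).2.1, hjt⟩

theorem exists_breakpointVec_eq (δ : ℝ) {c : ℝ} (hc : 0 < c) :
    ∃ o, breakpointVec P o δ = signVecAt P δ c := by
  by_cases hpos : ∃ i, 0 < (P i).eval 0 ∧ (P i).eval δ + c * (P i).eval 0 = 0
  · obtain ⟨i, hbi, hi⟩ := hpos
    refine ⟨some i, ?_⟩
    simp only [breakpointVec, if_pos hbi, threshold_eq P hbi.ne' hi]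
  push Not at hpos
  obtain ⟨t, htc, ht, hle⟩ := exists_threshold_max_lt P δ hc
  -- between the last threshold below `c` and `c` itself nothing switches
  have hright : signVecRight P δ t = signVecAt P δ c := funext fun k =>
    sgn01Lex_add_mul_eq_sgn01 htc
      (fun r hr hk => by_contra fun hb => by
        have hθ := threshold_eq P hb hk
        have := hle k hb (by rw [hθ]; exact hr.2)
        rw [hθ] at this
        linarith [hr.1])
      fun hk => not_lt.1 fun hb => hpos k hb hk
  rcases ht with rfl | ⟨j, hbj, rfl⟩
  · exact ⟨none, hright⟩
  by_cases hneg : ∃ i, (P i).eval 0 < 0 ∧ threshold P i δ = threshold P j δ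
  · obtain ⟨i, hbi, hi⟩ := hneg
    refine ⟨some i, ?_⟩
    simp only [breakpointVec, if_neg hbi.not_gt, hi, hright]
  push Not at hneg
  have hbj' : 0 < (P j).eval 0 := lt_of_le_of_ne (not_lt.1 fun h => hneg j h rfl) hbj.symm
  refine ⟨some j, ?_⟩
  simp only [breakpointVec, if_pos hbj', ← hright]
  funext k
  exact (sgn01Lex_eq_sgn01 fun hk => not_lt.1 fun hb => hneg k hb (threshold_eq P hb.ne hk)).symm

lemma ncard_range_sign_pattern_shift_le {d : ℕ} (hdeg : ∀ i, (P i).natDegree ≤ d) {R : ℝ[X]}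
    (hR : R.natDegree ≤ d) (a : ℝ) (h : Fin n → ℝ → Fin 2)
    (hh : ∀ k x y, SignType.sign x = SignType.sign y → h k x = h k y) :
    (Set.range fun δ k => h k ((P k).eval δ + a * R.eval δ * (P k).eval 0)).ncard ≤
      n * d + 1 := by
  have hQ : ∀ k, (P k + C (a * (P k).eval 0) * R).natDegree ≤ d := fun k =>
    (natDegree_add_le _ _).trans (max_le (hdeg k) ((natDegree_C_mul_le _ _).trans hR))
  convert ncard_range_sign_pattern_le _ hQ h hh using 4 with δ
  · funext k
    simp only [eval_add, eval_mul, eval_C]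
    ring_nf
  · simp

lemma ncard_range_signVecAt_shift_le {d : ℕ} (hdeg : ∀ i, (P i).natDegree ≤ d) {R : ℝ[X]}
    (hR : R.natDegree ≤ d) (a : ℝ) :
    (Set.range fun δ => signVecAt P δ (a * R.eval δ)).ncard ≤ n * d + 1 :=
  ncard_range_sign_pattern_shift_le P hdeg hR a _ fun _ _ _ => sgn01_eq_of_sign_eq

lemma ncard_range_signVecRight_shift_le {d : ℕ} (hdeg : ∀ i, (P i).natDegree ≤ d) {R : ℝ[X]}
    (hR : R.natDegree ≤ d) (a : ℝ) :
    (Set.range fun δ => signVecRight P δ (a * R.eval δ)).ncard ≤ n * d + 1 :=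
  ncard_range_sign_pattern_shift_le P hdeg hR a (fun k x => sgn01Lex x ((P k).eval 0))
    fun _ _ _ => sgn01Lex_eq_of_sign_eq _

theorem ncard_range_breakpointVec_le {d : ℕ} (hdeg : ∀ i, (P i).natDegree ≤ d)
    (o : Option (Fin n)) : (Set.range (breakpointVec P o)).ncard ≤ n * d + 1 := by
  rcases o with _ | i
  · have h0 := ncard_range_signVecRight_shift_le P hdeg (R := 0)
      (natDegree_zero.trans_le d.zero_le) 0
    simp only [eval_zero, mul_zero] at h0
    exact h0
  have hθ : threshold P i = fun δ => -((P i).eval 0)⁻¹ * (P i).eval δ := by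
    funext δ
    rw [threshold]
    ring
  by_cases hbi : 0 < (P i).eval 0
  · simpa only [breakpointVec, if_pos hbi, hθ] using
      ncard_range_signVecAt_shift_le P hdeg (hdeg i) _
  · simpa only [breakpointVec, if_neg hbi, hθ] using
      ncard_range_signVecRight_shift_le P hdeg (hdeg i) _

end SweepVectors

/-- for polynomials P_1,…,P_n of degree at most d, the sign vectors
(sgn(P_i(δ) + (1/β − 1)P_i(0)))_i over δ ∈ ℝ and β ∈ (0,1) take at most
(n² + n)d + n + 1 distinct values. -/
theorem stmt1 (n d : ℕ) (P : Fin n → Polynomial ℝ)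
    (hdeg : ∀ i, (P i).natDegree ≤ d) :
    Set.ncard {v : Fin n → Fin 2 |
        ∃ δ : ℝ, ∃ β ∈ Set.Ioo (0:ℝ) 1,
          v = fun i => sgn01 ((P i).eval δ + (1/β - 1) * (P i).eval 0)}
      ≤ (n^2 + n) * d + n + 1 := by
  refine (Set.ncard_le_ncard (t := ⋃ o, Set.range (breakpointVec P o)) ?_
    (Set.toFinite _)).trans ?_
  · rintro _ ⟨δ, β, ⟨hβ0, hβ1⟩, rfl⟩
    obtain ⟨o, ho⟩ := exists_breakpointVec_eq P δ (sub_pos.2 (one_lt_one_div hβ0 hβ1))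
    exact Set.mem_iUnion.2 ⟨o, δ, ho⟩
  calc _ ≤ ∑ o, (Set.range (breakpointVec P o)).ncard := Set.ncard_iUnion_le_of_fintype _
    _ ≤ ∑ _o : Option (Fin n), (n * d + 1) :=
        Finset.sum_le_sum fun o _ => ncard_range_breakpointVec_le P hdeg o
    _ = (n^2 + n) * d + n + 1 := by
        simp only [Finset.sum_const, Finset.card_univ, Fintype.card_option, Fintype.card_fin,
          smul_eq_mul]
        ring
end

section
/- Let n ≥ 1 and let v_1, ..., v_{2^n} be a Hamiltonian path in the hypercube {0,1}^n (consecutive vertices differ in exactly one coordinate), with b_i ∈ {1,...,n} the coordinate at which v_i and v_{i+1} differ. Let r_1 < r_2 < ... < r_{2^n - 1} be real numbers, and define for each k ∈ {1,...,n} the polynomial P_k(δ) = ∏_{i : b_i = k} (δ - r_i). Then the map δ ↦ (sgn(P_1(δ)), ..., sgn(P_n(δ))) (with sgn(x) = 1 if x ≥ 0 and 0 otherwise) realizes every vector in {0,1}^n as δ ranges over ℝ. -/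
/-!
Pick sample points `t 0 < r 0 < t 1 < r 1 < ⋯`. The negative factors of `P k (t j)` are the
`t j - r i` with `i ≥ j` and `b i = k`, so `P k (t j) ≥ 0` iff the number of those is even. Since
`v j` differs from `v 0` exactly in the coordinates flipped an odd number of times before step `j`,
the sign vector at `t j` is `v j` up to a fixed relabelling of each coordinate; as `v` runs through
all of `{0,1}^n`, so do the sign vectors.
-/

open Polynomial Finset

theorem prod_sub_nonneg_iff_even_card {ι R : Type*} [CommRing R] [LinearOrder R]
    [IsStrictOrderedRing R] [DecidableEq ι] (s : Finset ι) (r : ι → R) {x : R}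
    (hx : ∀ i ∈ s, x ≠ r i) :
    0 ≤ ∏ i ∈ s, (x - r i) ↔ Even #{i ∈ s | x < r i} := by
  induction s using Finset.induction_on with
  | empty => simp
  | insert a s ha ih =>
    have hs : ∀ i ∈ s, x ≠ r i := fun i hi => hx i (mem_insert_of_mem hi)
    have hp : ∏ i ∈ s, (x - r i) ≠ 0 := prod_ne_zero_iff.2 fun i hi => sub_ne_zero.2 (hs i hi)
    rw [prod_insert ha, filter_insert]
    rcases (hx a (mem_insert_self a s)).lt_or_gt with hxa | hxa
    · rw [if_pos hxa, card_insert_of_notMem (by simp [ha]), Nat.even_add_one, ← ih hs,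
        ← neg_mul_neg, mul_nonneg_iff_of_pos_left (by linarith), neg_nonneg, not_le]
      exact ⟨fun h => h.lt_of_ne hp, le_of_lt⟩
    · rw [if_neg hxa.not_gt, mul_nonneg_iff_of_pos_left (sub_pos.2 hxa), ih hs]

theorem StrictMono.exists_interlacing {α : Type*} [LinearOrder α] [DenselyOrdered α]
    [NoMinOrder α] {r : ℕ → α} (hr : StrictMono r) :
    ∃ t : ℕ → α, ∀ j i, (t j < r i ↔ j ≤ i) ∧ t j ≠ r i := by
  obtain ⟨t₀, ht₀⟩ := exists_lt (r 0)
  choose s hs using fun m : ℕ => exists_between (hr m.lt_add_one)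
  let t : ℕ → α := fun | 0 => t₀ | m + 1 => s m
  have below : ∀ j i, j ≤ i → t j < r i := fun
    | 0, i, _ => ht₀.trans_le (hr.monotone i.zero_le)
    | m + 1, _, h => (hs m).2.trans_le (hr.monotone h)
  have above : ∀ j i, i < j → r i < t j := fun
    | 0, _, h => absurd h (Nat.not_lt_zero _)
    | m + 1, _, h => (hr.monotone (Nat.le_of_lt_succ h)).trans_lt (hs m).1
  refine ⟨t, fun j i => ⟨⟨fun h => not_lt.1 fun hij => lt_asymm h (above j i hij), below j i⟩, ?_⟩⟩
  rcases le_or_gt j i with h | h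
  · exact (below j i h).ne
  · exact (above j i h).ne'

theorem apply_eq_apply_zero_iff_even_card {ι : Type*} [DecidableEq ι] {m : ℕ}
    (v : Fin m → ι → Bool) (b : ℕ → ι)
    (hb : ∀ i : ℕ, (hi : i + 1 < m) →
      ∀ k : ι, (v ⟨i, Nat.lt_of_succ_lt hi⟩ k ≠ v ⟨i + 1, hi⟩ k ↔ k = b i))
    (j : Fin m) (k : ι) :
    v j k = v ⟨0, j.pos⟩ k ↔ Even #{i ∈ range j | b i = k} := by
  obtain ⟨j, hj⟩ := j
  induction j with
  | zero => simp
  | succ j ih =>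
    have hflip := hb j hj k
    specialize ih (Nat.lt_of_succ_lt hj)
    rw [range_add_one, filter_insert]
    split_ifs with hbj
    · rw [card_insert_of_notMem (by simp), Nat.even_add_one, ← ih,
        Bool.eq_not.2 (hflip.2 hbj.symm).symm]
      exact Bool.not_eq
    · rw [← ih, ← not_ne_iff.1 (mt hflip.1 (Ne.symm hbj))]

theorem sgn01_eq_iff (x : ℝ) (c : Fin 2) : sgn01 x = c ↔ (0 ≤ x ↔ c = 1) := by
  fin_cases c <;> by_cases hx : 0 ≤ x <;> simp [sgn01, hx]

theorem Bool.exists_eq_iff (b : Bool) (p : Prop) : ∃ x : Bool, (x = b ↔ p) := by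
  by_cases hp : p
  · exact ⟨b, by simp [hp]⟩
  · exact ⟨!b, by simp [hp]⟩

theorem stmt5_general (n : ℕ)
    (v : Fin (2^n) → (Fin n → Bool)) (hv : Function.Bijective v)
    (b : ℕ → Fin n)
    (hb : ∀ i : ℕ, (hi : i + 1 < 2^n) →
      ∀ k : Fin n, (v ⟨i, Nat.lt_of_succ_lt hi⟩ k ≠ v ⟨i + 1, hi⟩ k ↔ k = b i))
    (r : ℕ → ℝ) (hr : StrictMono r)
    (P : Fin n → Polynomial ℝ)
    (hP : ∀ k : Fin n,
      P k = ∏ i ∈ (Finset.range (2^n - 1)).filter (fun i => b i = k),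
        (X - C (r i))) :
    ∀ a : Fin n → Fin 2, ∃ δ : ℝ, ∀ k, sgn01 ((P k).eval δ) = a k := by
  intro a
  have hpos : 0 < 2 ^ n := Nat.two_pow_pos n
  obtain ⟨t, ht⟩ := hr.exists_interlacing
  have hsign : ∀ (j : Fin (2 ^ n)) k, 0 ≤ (P k).eval (t j) ↔
      Even #{i ∈ Ico (j : ℕ) (2 ^ n - 1) | b i = k} := by
    intro j k
    simp only [hP, eval_prod, eval_sub, eval_X, eval_C]
    rw [prod_sub_nonneg_iff_even_card _ _ fun i _ => (ht j i).2]
    congr! 2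
    ext i
    simp only [mem_filter, mem_range, mem_Ico, (ht j i).1]
    tauto
  have hparity : ∀ (j : Fin (2 ^ n)) k, 0 ≤ (P k).eval (t j) ↔
      (Even #{i ∈ range (2 ^ n - 1) | b i = k} ↔ v j k = v ⟨0, hpos⟩ k) := by
    intro j k
    rw [hsign, apply_eq_apply_zero_iff_even_card v b hb, card_filter, card_filter, card_filter,
      ← sum_range_add_sum_Ico _ (by omega : (j : ℕ) ≤ 2 ^ n - 1), Nat.even_add]
    tauto
  choose w hw using fun k => Bool.exists_eq_iff (v ⟨0, hpos⟩ k)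
    (Even #{i ∈ range (2 ^ n - 1) | b i = k} ↔ a k = 1)
  obtain ⟨j, hj⟩ := hv.2 w
  refine ⟨t j, fun k => (sgn01_eq_iff _ _).2 ?_⟩
  rw [hparity, hj, hw]
  tauto

/-- given a Hamiltonian path v_1,…,v_{2^n} in the hypercube {0,1}^n
with b_i the coordinate where v_i and v_{i+1} differ, and reals
r_1 < ⋯ < r_{2^n − 1}, the polynomials P_k(δ) = ∏_{i : b_i = k} (δ − r_i) realize
every sign vector in {0,1}^n as δ ranges over ℝ. -/
theorem stmt5 (n : ℕ) (hn : 1 ≤ n)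
    (v : Fin (2^n) → (Fin n → Bool)) (hv : Function.Bijective v)
    (b : ℕ → Fin n)
    (hb : ∀ i : ℕ, (hi : i + 1 < 2^n) →
      ∀ k : Fin n, (v ⟨i, Nat.lt_of_succ_lt hi⟩ k ≠ v ⟨i + 1, hi⟩ k ↔ k = b i))
    (r : ℕ → ℝ) (hr : StrictMono r)
    (P : Fin n → Polynomial ℝ)
    (hP : ∀ k : Fin n,
      P k = ∏ i ∈ (Finset.range (2^n - 1)).filter (fun i => b i = k),
        (X - C (r i))) :
    ∀ a : Fin n → Fin 2, ∃ δ : ℝ, ∀ k, sgn01 ((P k).eval δ) = a k :=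
  stmt5_general n v hv b hb r hr P hP
end

section
/- Let T ≥ 2 and let 𝒫_D be the family of binary relations ≿_D on ℝ^T parametrized by strictly decreasing functions D : {1,...,T} → (0,1), where x ≿_D y iff Σ_t D(t)x_t ≥ Σ_t D(t)y_t. Then 𝒫_D shatters a set of T − 1 pairs of points; explicitly, for any ε ∈ (0,1), the pairs (x^i, y^i) = ((1−ε)e_i, e_{i+1}) for i = 1, ..., T−1 (with e_i the standard basis vectors) are shattered: for every (a_1,...,a_{T−1}) ∈ {0,1}^{T−1} there is a strictly decreasing D : {1,...,T} → (0,1) such that (1−ε)D(i) ≥ D(i+1) iff a_i = 1. -/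
/-!
Choose the discount factor one period at a time: `D(i+1) = r_i D(i)` with ratio `r_i = 1 - ε`
when `a_i = 1` and `r_i = 1 - ε/2` when `a_i = 0`. Every ratio lies in `(0, 1)`, so `D` is
positive and strictly decreasing, and `(1 - ε) D(i) ≥ D(i+1)` holds exactly when `r_i ≤ 1 - ε`,
that is, when `a_i = 1`.
-/

namespace Shattering

noncomputable def discountOfRatios (d₀ : ℝ) (r : ℕ → ℝ) (n : ℕ) : ℝ :=
  d₀ * ∏ k ∈ Finset.range n, r k

variable {d₀ : ℝ} {r : ℕ → ℝ}

lemma discountOfRatios_succ (d₀ : ℝ) (r : ℕ → ℝ) (n : ℕ) :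
    discountOfRatios d₀ r (n + 1) = discountOfRatios d₀ r n * r n := by
  simp only [discountOfRatios, Finset.prod_range_succ, mul_assoc]

lemma discountOfRatios_pos (hd₀ : 0 < d₀) (hr : ∀ n, 0 < r n) (n : ℕ) :
    0 < discountOfRatios d₀ r n :=
  mul_pos hd₀ (Finset.prod_pos fun k _ => hr k)

lemma strictAnti_discountOfRatios (hd₀ : 0 < d₀) (hr₀ : ∀ n, 0 < r n) (hr₁ : ∀ n, r n < 1) :
    StrictAnti (discountOfRatios d₀ r) := by
  refine strictAnti_nat_of_succ_lt fun n => ?_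
  rw [discountOfRatios_succ]
  exact mul_lt_of_lt_one_right (discountOfRatios_pos hd₀ hr₀ n) (hr₁ n)

lemma discountOfRatios_lt_one (hd₀ : d₀ ∈ Set.Ioo (0 : ℝ) 1) (hr₀ : ∀ n, 0 < r n)
    (hr₁ : ∀ n, r n < 1) (n : ℕ) : discountOfRatios d₀ r n < 1 :=
  calc discountOfRatios d₀ r n
      ≤ discountOfRatios d₀ r 0 := (strictAnti_discountOfRatios hd₀.1 hr₀ hr₁).antitone n.zero_le
    _ = d₀ := by simp [discountOfRatios]
    _ < 1 := hd₀.2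

lemma discountOfRatios_succ_le_mul_iff (hd₀ : 0 < d₀) (hr : ∀ n, 0 < r n) (c : ℝ) (n : ℕ) :
    discountOfRatios d₀ r (n + 1) ≤ c * discountOfRatios d₀ r n ↔ r n ≤ c := by
  rw [discountOfRatios_succ, mul_comm c]
  exact mul_le_mul_iff_right₀ (discountOfRatios_pos hd₀ hr n)

noncomputable def labelRatio (ε : ℝ) (b : Bool) : ℝ :=
  if b then 1 - ε else 1 - ε / 2

variable {ε : ℝ}

lemma labelRatio_mem_Ioo (hε : ε ∈ Set.Ioo (0 : ℝ) 1) (b : Bool) :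
    labelRatio ε b ∈ Set.Ioo (0 : ℝ) 1 := by
  obtain ⟨hε₀, hε₁⟩ := hε
  cases b <;> simp only [labelRatio, Bool.false_eq_true, ite_false, ite_true, Set.mem_Ioo] <;>
    constructor <;> linarith

lemma labelRatio_le_iff (hε : 0 < ε) (b : Bool) : labelRatio ε b ≤ 1 - ε ↔ b = true := by
  cases b
  · simp only [labelRatio, Bool.false_eq_true, iff_false, not_le, ite_false]
    linarith
  · simp [labelRatio]

end Shattering

open Shattering in
theorem stmt8_general (T : ℕ) (ε : ℝ) (hε : ε ∈ Set.Ioo (0:ℝ) 1) :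
    ∀ a : Fin (T - 1) → Bool,
      ∃ D : ℕ → ℝ,
        (∀ t ∈ Set.Icc 1 T, D t ∈ Set.Ioo (0:ℝ) 1) ∧
        (StrictAntiOn D (Set.Icc 1 T)) ∧
        (∀ i : Fin (T - 1),
          ((1 - ε) * D (i.val + 1) ≥ D (i.val + 2) ↔ a i = true)) := by
  intro a
  set r : ℕ → ℝ := fun n => labelRatio ε (if h : n < T - 1 then a ⟨n, h⟩ else true)
  have hr₀ (n : ℕ) : 0 < r n := (labelRatio_mem_Ioo hε _).1
  have hr₁ (n : ℕ) : r n < 1 := (labelRatio_mem_Ioo hε _).2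
  have hd₀ : (1 / 2 : ℝ) ∈ Set.Ioo 0 1 := by norm_num
  -- `D t` is the discount of period `t`, so period `1` gets the initial value `1/2`.
  refine ⟨fun t => discountOfRatios (1 / 2) r (t - 1),
    fun t _ => ⟨discountOfRatios_pos hd₀.1 hr₀ _, discountOfRatios_lt_one hd₀ hr₀ hr₁ _⟩,
    fun m hm n _ hmn => strictAnti_discountOfRatios hd₀.1 hr₀ hr₁ (by grind), fun i => ?_⟩
  have hri : r i = labelRatio ε (a i) := by simp [r, i.isLt]
  simpa [hri, labelRatio_le_iff hε.1] using
    discountOfRatios_succ_le_mul_iff hd₀.1 hr₀ (1 - ε) i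

/-- for T ≥ 2 and ε ∈ (0,1), the T − 1 pairs ((1−ε)e_i, e_{i+1}) are
shattered by the discounted utility model: for every label vector a ∈ {0,1}^{T−1}
there exists a strictly decreasing D : {1,…,T} → (0,1) with
(1−ε)·D(i) ≥ D(i+1) iff a_i = 1. -/
theorem stmt8 (T : ℕ) (hT : 2 ≤ T) (ε : ℝ) (hε : ε ∈ Set.Ioo (0:ℝ) 1) :
    ∀ a : Fin (T - 1) → Bool,
      ∃ D : ℕ → ℝ,
        (∀ t ∈ Set.Icc 1 T, D t ∈ Set.Ioo (0:ℝ) 1) ∧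
        (StrictAntiOn D (Set.Icc 1 T)) ∧
        (∀ i : Fin (T - 1),
          ((1 - ε) * D (i.val + 1) ≥ D (i.val + 2) ↔ a i = true)) :=
  stmt8_general T ε hε
end
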